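/- Let k be a field and let D be a k-linear, Hom-finite, Ext-bounded triangulated category satisfying the comparability property. Let d ≥ 2 be an integer, T an endofunctor of D (triangulated and not virtually zero), and suppose there exist a split generator G of D, an object A, and for each n ≥ 1 a distinguished triangle A[(1−d)(n−1)] → T^{n−1}(G) → Tⁿ(G) → A[(1−d)(n−1)+1]. Then: (iii) if t < 0, h_t(T) = (1−d)t, and there is a nonzero object E with T(E) ≅ E[1−d], then h^pol_t(T) = 0; (iv) if t > 0, h_t(T) = 0, and there is a nonzero object E′ with T(E′) ≅ E′, then h^pol_t(T) = 0. -/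

import Mathlib

/-!
Write `Xₙ = Tⁿ(G)`. By comparability, `δ_t(G, Xₙ)` is squeezed between constant multiples of the
Ext-distance `ε_t(G, Xₙ)`, so it suffices to show `ε_t(G, Xₙ) ≍ e^{n h_t(T)}`.

The triangles `A[(1-d)n] → Xₙ → Xₙ₊₁` give
`ε_t(G, Xₙ) ≤ ε_t(G, G) + e^t ε_t(G, A) Σ_{k<n} e^{k(1-d)t}`, a geometric sum of size
`O(e^{n max((1-d)t, 0)})` since `(1-d)t ≠ 0`. Conversely, applying `Tⁿ` to a tower of `E` over `G`
of value `v` gives `ε_t(G, TⁿE) ≤ v ε_t(G, Xₙ)`, and `TⁿE ≅ E[nr]` (`r = 1-d`, resp. `r = 0`) turns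
the left side into `e^{nrt} ε_t(G, E)`, with `ε_t(G, E) > 0` because `E ≠ 0`. In both cases
`rt = max((1-d)t, 0) = h_t(T)`, so `log δ_t(G, Xₙ) - n h_t(T)` stays bounded and its quotient by
`log n` tends to `0`.
-/

open CategoryTheory Category Limits Pretriangulated Filter Topology
open scoped ENNReal

universe v u

namespace CatDyn

variable {D : Type u} [Category.{v} D] [Limits.HasZeroObject D] [Preadditive D]
  [HasShift D ℤ] [∀ n : ℤ, (CategoryTheory.shiftFunctor D n).Additive] [Pretriangulated D]
  [HasBinaryBiproducts D]

/-- A tower `0 = A₀ → A₁ → ⋯ → A_m ≅ N ⊕ N'` with cones shifts of `M`,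
computing the complexity of `N` with respect to `M`. -/
structure Tower (M N : D) where
  m : ℕ
  A : Fin (m + 1) → D
  f : ∀ i : Fin m, A i.castSucc ⟶ A i.succ
  shifts : Fin m → ℤ
  N' : D
  isZero_zero : IsZero (A 0)
  lastIso : A (Fin.last m) ≅ N ⊞ N'
  dist : ∀ i : Fin m, ∃ (g : A i.succ ⟶ M⟦shifts i⟧) (h : M⟦shifts i⟧ ⟶ (A i.castSucc)⟦(1 : ℤ)⟧),
    Triangle.mk (f i) g h ∈ distTriang D

/-- The value `Σ_k e^{n_k t}` of a tower. -/
noncomputable def Tower.value {M N : D} (t : ℝ) (T : Tower M N) : ℝ≥0∞ :=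
  ∑ i : Fin T.m, ENNReal.ofReal (Real.exp (T.shifts i * t))

/-- The complexity function `δ_t(M,N)`, valued in `[0,∞]`; it is `∞` iff no tower exists,
i.e. iff `N` is not in the thick triangulated subcategory generated by `M`. -/
noncomputable def complexity (t : ℝ) (M N : D) : ℝ≥0∞ :=
  ⨅ T : Tower M N, T.value t

/-- `G` is a split generator: every object admits a tower over `G`, i.e. the thick
triangulated subcategory generated by `G` is all of `D`. -/
def IsSplitGenerator (G : D) : Prop := ∀ N : D, Nonempty (Tower G N)

/-- The `n`-th iterate of an endofunctor. -/
def fpow (F : D ⥤ D) : ℕ → D ⥤ D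
  | 0 => 𝟭 D
  | n + 1 => fpow F n ⋙ F

/-- `F` is not virtually zero: no positive iterate is the zero functor. -/
def NotVirtuallyZero (F : D ⥤ D) : Prop := ∀ n : ℕ, 0 < n → ¬ IsZero (fpow F n)

/-- The categorical entropy `h_t(F) ∈ [-∞,∞)`, computed with split generator `G`
(the limit exists and is independent of the generator). -/
noncomputable def entropy (t : ℝ) (F : D ⥤ D) (G : D) : EReal :=
  limsup (fun n : ℕ =>
    ENNReal.log (complexity t G ((fpow F n).obj G)) * (((n : ℝ)⁻¹ : ℝ) : EReal)) atTop

/-- The categorical polynomial entropy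
`h^pol_t(F) = limsup (log δ_t(G, Fⁿ G) - n h_t(F)) / log n`. -/
noncomputable def polyEntropy (t : ℝ) (F : D ⥤ D) (G : D) : EReal :=
  limsup (fun n : ℕ =>
    (ENNReal.log (complexity t G ((fpow F n).obj G)) - ((n : ℝ) : EReal) * entropy t F G)
      * ((((Real.log n)⁻¹ : ℝ)) : EReal)) atTop

/-- The lower categorical polynomial entropy (with `liminf` instead of `limsup`). -/
noncomputable def polyEntropyLow (t : ℝ) (F : D ⥤ D) (G : D) : EReal :=
  liminf (fun n : ℕ =>
    (ENNReal.log (complexity t G ((fpow F n).obj G)) - ((n : ℝ) : EReal) * entropy t F G)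
      * ((((Real.log n)⁻¹ : ℝ)) : EReal)) atTop

section Linear

variable (𝕜 : Type*) [Field 𝕜] [Linear 𝕜 D]

/-- The Ext-distance `ε_t(M,N) = Σ_{k∈ℤ} dim Hom(M, N[k]) e^{-kt}`. -/
noncomputable def extDist (t : ℝ) (M N : D) : ℝ≥0∞ :=
  ∑' k : ℤ, (Module.finrank 𝕜 (M ⟶ N⟦k⟧) : ℝ≥0∞) * ENNReal.ofReal (Real.exp (-k * t))

variable (D) in
/-- `D` is Hom-finite over `𝕜`. -/
def HomFinite : Prop := ∀ X Y : D, FiniteDimensional 𝕜 (X ⟶ Y)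

variable (D) in
/-- `D` is Ext-bounded: `Hom(X, Y[k]) = 0` for all but finitely many `k`. -/
def ExtBounded : Prop := ∀ X Y : D, {k : ℤ | ∃ f : X ⟶ Y⟦k⟧, f ≠ 0}.Finite

variable (D) in
/-- The comparability property: `δ_t` and `ε_t` control each other, uniformly in the objects. -/
def Comparability : Prop :=
  ∃ C₁ C₂ : ℝ → ℝ, (∀ t, 0 < C₁ t ∧ 0 < C₂ t) ∧
    ∀ (t : ℝ) (M N : D),
      ENNReal.ofReal (C₁ t) * extDist 𝕜 t M N ≤ complexity t M N ∧
      complexity t M N ≤ ENNReal.ofReal (C₂ t) * extDist 𝕜 t M N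

end Linear

end CatDyn

open Finset Real

namespace CatDyn

lemma exists_sum_range_exp_mul_le {a : ℝ} (ha : a ≠ 0) :
    ∃ C : ℝ, ∀ n : ℕ, ∑ k ∈ range n, exp (k * a) ≤ C * exp (n * max a 0) := by
  simp_rw [exp_nat_mul]
  rcases ha.lt_or_gt with ha | ha
  · have hlt : exp a < 1 := exp_lt_one_iff.2 ha
    refine ⟨(1 - exp a)⁻¹, fun n => ?_⟩
    rw [max_eq_right ha.le, exp_zero, one_pow, mul_one, ← one_div, range_eq_Ico]
    simpa using geom_sum_Ico_le_of_lt_one (m := 0) (n := n) (exp_pos a).le hlt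
  · have hgt : 1 < exp a := one_lt_exp_iff.2 ha
    refine ⟨(exp a - 1)⁻¹, fun n => ?_⟩
    rw [max_eq_left ha.le, geom_sum_eq hgt.ne', div_eq_inv_mul]
    have : 0 ≤ (exp a - 1)⁻¹ := inv_nonneg.2 (by linarith)
    gcongr
    linarith

lemma tendsto_log_sub_mul_inv_log {g : ℕ → ℝ} {h c₁ c₂ : ℝ} (hc₁ : 0 < c₁)
    (hlow : ∀ n : ℕ, c₁ * exp (n * h) ≤ g n) (hup : ∀ n : ℕ, g n ≤ c₂ * exp (n * h)) :
    Tendsto (fun n : ℕ => (log (g n) - n * h) * (log n)⁻¹) atTop (𝓝 0) := by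
  have hpos : ∀ n : ℕ, 0 < c₁ * exp (n * h) := fun n => mul_pos hc₁ (exp_pos _)
  have hc₂ : 0 < c₂ :=
    pos_of_mul_pos_left ((hpos 0).trans_le ((hlow 0).trans (hup 0))) (exp_pos _).le
  have hbounds : ∀ n : ℕ, log c₁ ≤ log (g n) - n * h ∧ log (g n) - n * h ≤ log c₂ := by
    intro n
    have h₁ := log_le_log (hpos n) (hlow n)
    have h₂ := log_le_log ((hpos n).trans_le (hlow n)) (hup n)
    rw [log_mul hc₁.ne' (exp_pos _).ne', log_exp] at h₁
    rw [log_mul hc₂.ne' (exp_pos _).ne', log_exp] at h₂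
    constructor <;> linarith
  have hinv : Tendsto (fun n : ℕ => (log n)⁻¹) atTop (𝓝 0) :=
    (tendsto_log_atTop.comp tendsto_natCast_atTop_atTop).inv_tendsto_atTop
  have hinv_nonneg (n : ℕ) : 0 ≤ (log n)⁻¹ := inv_nonneg.2 (log_natCast_nonneg n)
  exact tendsto_of_tendsto_of_tendsto_of_le_of_le (by simpa using hinv.const_mul (log c₁))
    (by simpa using hinv.const_mul (log c₂))
    (fun n => mul_le_mul_of_nonneg_right (hbounds n).1 (hinv_nonneg n))
    (fun n => mul_le_mul_of_nonneg_right (hbounds n).2 (hinv_nonneg n))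

lemma finrank_le_add_of_exact {K U V W : Type*} [Field K] [AddCommGroup U] [Module K U]
    [AddCommGroup V] [Module K V] [AddCommGroup W] [Module K W] [FiniteDimensional K U]
    [FiniteDimensional K V] [FiniteDimensional K W] {f : U →ₗ[K] V} {g : V →ₗ[K] W}
    (hfg : Function.Exact f g) :
    Module.finrank K V ≤ Module.finrank K U + Module.finrank K W := by
  rw [← g.finrank_range_add_finrank_ker, LinearMap.exact_iff.1 hfg, add_comm]
  exact add_le_add f.finrank_range_le (Submodule.finrank_le _)

section ExtDist

variable {D : Type u} [Category.{v} D] [Preadditive D] [HasShift D ℤ]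
  (𝕜 : Type*) [Field 𝕜] [Linear 𝕜 D]

lemma extDist_congr (t : ℝ) (M : D) {N N' : D} (e : N ≅ N') :
    extDist 𝕜 t M N = extDist 𝕜 t M N' := by
  unfold extDist
  congr! 3 with k
  exact congrArg _ (Linear.homCongr 𝕜 (Iso.refl M) ((shiftFunctor D k).mapIso e)).finrank_eq

lemma extDist_shift (t : ℝ) (M N : D) (m : ℤ) :
    extDist 𝕜 t M (N⟦m⟧) = ENNReal.ofReal (exp (m * t)) * extDist 𝕜 t M N := by
  unfold extDist
  rw [← ENNReal.tsum_mul_left, ← (Equiv.subRight m).tsum_eq]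
  congr 1
  funext k
  have e : N⟦k⟧ ≅ (N⟦m⟧)⟦Equiv.subRight m k⟧ :=
    (shiftFunctorAdd' D m (k - m) k (by ring)).app N
  rw [← (Linear.homCongr 𝕜 (Iso.refl M) e).finrank_eq, mul_left_comm,
    ← ENNReal.ofReal_mul (exp_pos _).le, ← exp_add, Equiv.subRight_apply]
  push_cast
  ring_nf

lemma extDist_lt_top (hbdd : ExtBounded D) (t : ℝ) (M N : D) :
    extDist 𝕜 t M N < ⊤ := by
  unfold extDist
  rw [tsum_eq_sum (s := (hbdd M N).toFinset)]
  · exact ENNReal.sum_lt_top.2 fun k _ => ENNReal.mul_lt_top (by simp) ENNReal.ofReal_lt_top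
  · intro k hk
    have : Subsingleton (M ⟶ N⟦k⟧) := ⟨fun f g => by
      simp only [Set.Finite.mem_toFinset, Set.mem_ofPred_eq, not_exists, not_not] at hk
      rw [hk f, hk g]⟩
    simp [Module.finrank_zero_of_subsingleton]

lemma extDist_of_isZero (t : ℝ) (M : D) {N : D} (hN : IsZero N) : extDist 𝕜 t M N = 0 := by
  refine ENNReal.tsum_eq_zero.2 fun k => ?_
  have : Subsingleton (M ⟶ N⟦k⟧) := ⟨((shiftFunctor D k).map_isZero hN).eq_of_tgt⟩
  simp [Module.finrank_zero_of_subsingleton]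

lemma extDist_le_of_retract (hfin : HomFinite D 𝕜) (t : ℝ) (M : D) {N P : D}
    (r : Retract N P) : extDist 𝕜 t M N ≤ extDist 𝕜 t M P := by
  refine ENNReal.tsum_le_tsum fun k => ?_
  have := hfin M (P⟦k⟧)
  gcongr
  exact LinearMap.finrank_le_finrank_of_injective (f := Linear.rightComp 𝕜 M (r.map _).i)
    fun φ ψ h => (cancel_mono (r.map (shiftFunctor D k)).i).1 h

lemma hom_shift_eq_zero {G E : D} (hzero : ∀ (k : ℤ) (f : G ⟶ E⟦k⟧), f = 0) {n j : ℤ}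
    (f : G⟦n⟧ ⟶ E⟦j⟧) : f = 0 := by
  have h := hzero (j + -n) ((shiftFunctorCompIsoId D n (-n) (add_neg_cancel n)).inv.app G ≫
    f⟦-n⟧' ≫ (shiftFunctorAdd D j (-n)).inv.app E)
  rwa [Preadditive.IsIso.comp_left_eq_zero, Preadditive.IsIso.comp_right_eq_zero,
    Functor.map_eq_zero_iff] at h

noncomputable def fpowObjIsoShift (F : D ⥤ D) [F.CommShift ℤ] {E : D} {s : ℤ}
    (e : F.obj E ≅ E⟦s⟧) : ∀ n : ℕ, (fpow F n).obj E ≅ E⟦s * n⟧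
  | 0 => (shiftFunctorZero' D (s * (0 : ℕ)) (by simp)).symm.app E
  | n + 1 => F.mapIso (fpowObjIsoShift F e n) ≪≫ (F.commShiftIso (s * n)).app E ≪≫
      (shiftFunctor D (s * n)).mapIso e ≪≫
      (shiftFunctorAdd' D s (s * n) (s * (n + 1 : ℕ)) (by push_cast; ring)).symm.app E

end ExtDist

section Triangulated

variable {D : Type u} [Category.{v} D] [HasZeroObject D] [Preadditive D] [HasShift D ℤ]
  [∀ n : ℤ, (shiftFunctor D n).Additive] [Pretriangulated D]
  (𝕜 : Type*) [Field 𝕜] [Linear 𝕜 D]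

lemma finrank_hom_obj₂_le (hfin : HomFinite D 𝕜) (M : D) {S : Triangle D}
    (hS : S ∈ distTriang D) :
    Module.finrank 𝕜 (M ⟶ S.obj₂) ≤
      Module.finrank 𝕜 (M ⟶ S.obj₁) + Module.finrank 𝕜 (M ⟶ S.obj₃) := by
  have := hfin M S.obj₁
  have := hfin M S.obj₂
  have := hfin M S.obj₃
  refine finrank_le_add_of_exact (f := Linear.rightComp 𝕜 M S.mor₁)
    (g := Linear.rightComp 𝕜 M S.mor₂) fun φ => ⟨fun hφ => ?_, ?_⟩
  · obtain ⟨ψ, hψ⟩ := Triangle.coyoneda_exact₂ S hS φ hφ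
    exact ⟨ψ, hψ.symm⟩
  · rintro ⟨ψ, rfl⟩
    simp [comp_distTriang_mor_zero₁₂ S hS]

lemma extDist_obj₂_le (hfin : HomFinite D 𝕜) (t : ℝ) (M : D) {S : Triangle D}
    (hS : S ∈ distTriang D) :
    extDist 𝕜 t M S.obj₂ ≤ extDist 𝕜 t M S.obj₁ + extDist 𝕜 t M S.obj₃ := by
  unfold extDist
  rw [← ENNReal.tsum_add]
  refine ENNReal.tsum_le_tsum fun k => ?_
  rw [← add_mul]
  gcongr
  exact_mod_cast finrank_hom_obj₂_le 𝕜 hfin M (Triangle.shift_distinguished S hS k)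

lemma extDist_le_of_distTriang_succ (hfin : HomFinite D 𝕜) (t : ℝ) (M A : D) (s : ℤ)
    (X : ℕ → D) (htri : ∀ n : ℕ, ∃ (f : A⟦s * n⟧ ⟶ X n) (g : X n ⟶ X (n + 1))
      (h : X (n + 1) ⟶ (A⟦s * n⟧)⟦(1 : ℤ)⟧), Triangle.mk f g h ∈ distTriang D) (n : ℕ) :
    extDist 𝕜 t M (X n) ≤ extDist 𝕜 t M (X 0) +
      ENNReal.ofReal (∑ k ∈ range n, exp (k * (s * t) + t)) * extDist 𝕜 t M A := by
  induction n with
  | zero => simp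
  | succ n ih =>
    obtain ⟨f, g, h, hS⟩ := htri n
    have hstep := extDist_obj₂_le 𝕜 hfin t M (rot_of_distTriang _ hS)
    rw [Triangle.rotate_obj₃, Triangle.mk_obj₁, extDist_shift, extDist_shift, ← mul_assoc,
      ← ENNReal.ofReal_mul (exp_pos _).le, ← exp_add] at hstep
    refine hstep.trans ?_
    rw [sum_range_succ, ENNReal.ofReal_add (sum_nonneg fun _ _ => (exp_pos _).le) (exp_pos _).le,
      add_mul, ← add_assoc]
    refine add_le_add ih (le_of_eq ?_)
    congr 3
    push_cast
    ring

lemma exists_extDist_le_of_distTriang_succ (hfin : HomFinite D 𝕜) (hbdd : ExtBounded D)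
    {t : ℝ} (M A : D) {s : ℤ} (hst : s * t ≠ 0) (X : ℕ → D)
    (htri : ∀ n : ℕ, ∃ (f : A⟦s * n⟧ ⟶ X n) (g : X n ⟶ X (n + 1))
      (h : X (n + 1) ⟶ (A⟦s * n⟧)⟦(1 : ℤ)⟧), Triangle.mk f g h ∈ distTriang D) :
    ∃ c : ℝ, ∀ n : ℕ, extDist 𝕜 t M (X n) ≤ ENNReal.ofReal (c * exp (n * max (s * t) 0)) := by
  obtain ⟨C, hC⟩ := exists_sum_range_exp_mul_le hst
  set x₀ := (extDist 𝕜 t M (X 0)).toReal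
  set a := (extDist 𝕜 t M A).toReal
  refine ⟨x₀ + exp t * C * a, fun n => ?_⟩
  have hsum : ∑ k ∈ range n, exp (k * (s * t) + t) =
      exp t * ∑ k ∈ range n, exp (k * (s * t)) := by
    rw [mul_sum]
    exact sum_congr rfl fun k _ => by rw [exp_add, mul_comm]
  have hx₀ : x₀ ≤ x₀ * exp (n * max (s * t) 0) :=
    le_mul_of_one_le_right ENNReal.toReal_nonneg (one_le_exp (by positivity))
  have hS := mul_le_mul_of_nonneg_left (hC n)
    (mul_nonneg (exp_pos t).le (ENNReal.toReal_nonneg : 0 ≤ a))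
  calc extDist 𝕜 t M (X n)
      ≤ extDist 𝕜 t M (X 0) +
          ENNReal.ofReal (∑ k ∈ range n, exp (k * (s * t) + t)) * extDist 𝕜 t M A :=
        extDist_le_of_distTriang_succ 𝕜 hfin t M A s X htri n
    _ = ENNReal.ofReal (x₀ + (∑ k ∈ range n, exp (k * (s * t) + t)) * a) := by
        rw [ENNReal.ofReal_add ENNReal.toReal_nonneg
          (mul_nonneg (sum_nonneg fun _ _ => (exp_pos _).le) ENNReal.toReal_nonneg),
          ENNReal.ofReal_mul (sum_nonneg fun _ _ => (exp_pos _).le),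
          ENNReal.ofReal_toReal (extDist_lt_top 𝕜 hbdd t M _).ne,
          ENNReal.ofReal_toReal (extDist_lt_top 𝕜 hbdd t M _).ne]
    _ ≤ ENNReal.ofReal ((x₀ + exp t * C * a) * exp (n * max (s * t) 0)) := by
        refine ENNReal.ofReal_le_ofReal ?_
        rw [hsum]
        linarith

end Triangulated

section Complexity

variable {D : Type u} [Category.{v} D] [HasZeroObject D] [Preadditive D] [HasShift D ℤ]
  [∀ n : ℤ, (shiftFunctor D n).Additive] [Pretriangulated D] [HasBinaryBiproducts D]
  (𝕜 : Type*) [Field 𝕜] [Linear 𝕜 D]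

namespace Tower

lemma isZero_of_forall_hom_eq_zero {G E : D} (S : Tower G E)
    (hzero : ∀ (k : ℤ) (f : G ⟶ E⟦k⟧), f = 0) : IsZero E := by
  have key : ∀ (i : ℕ) (hi : i ≤ S.m) (j : ℤ) (φ : S.A ⟨i, by omega⟩ ⟶ E⟦j⟧), φ = 0 := by
    intro i
    induction i with
    | zero => exact fun _ _ φ => S.isZero_zero.eq_of_src φ 0
    | succ i ih =>
      intro hi j φ
      obtain ⟨g, h, hS⟩ := S.dist ⟨i, hi⟩
      obtain ⟨ψ, rfl⟩ := Triangle.yoneda_exact₂ _ hS φ (ih (by omega) j _)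
      have hψ : ψ = 0 := hom_shift_eq_zero hzero ψ
      rw [hψ]
      exact comp_zero
  have hfst := key S.m le_rfl 0 (S.lastIso.hom ≫ biprod.fst ≫ (shiftFunctorZero D ℤ).inv.app E)
  rw [← cancel_epi S.lastIso.inv, Iso.inv_hom_id_assoc, comp_zero,
    Preadditive.IsIso.comp_right_eq_zero] at hfst
  rw [IsZero.iff_id_eq_zero, ← biprod.inl_fst, hfst, comp_zero]

lemma extDist_pos (hfin : HomFinite D 𝕜) (t : ℝ) {G E : D} (S : Tower G E)
    (hE : ¬IsZero E) :
    0 < extDist 𝕜 t G E := by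
  obtain ⟨k, f, hf⟩ : ∃ (k : ℤ) (f : G ⟶ E⟦k⟧), f ≠ 0 := by
    by_contra! h
    exact hE (S.isZero_of_forall_hom_eq_zero h)
  have := hfin G (E⟦k⟧)
  have : Nontrivial (G ⟶ E⟦k⟧) := ⟨f, 0, hf⟩
  refine lt_of_lt_of_le ?_ (ENNReal.le_tsum k)
  exact ENNReal.mul_pos (by exact_mod_cast Module.finrank_pos.ne')
    (ENNReal.ofReal_pos.2 (exp_pos _)).ne'

lemma extDist_le_value_mul (hfin : HomFinite D 𝕜) (t : ℝ) (M : D) {N P : D} (S : Tower N P) :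
    extDist 𝕜 t M P ≤ S.value t * extDist 𝕜 t M N := by
  have key : ∀ (i : ℕ) (hi : i ≤ S.m), extDist 𝕜 t M (S.A ⟨i, by omega⟩) ≤
      (∑ j : Fin i, ENNReal.ofReal (exp (S.shifts (Fin.castLE hi j) * t))) *
        extDist 𝕜 t M N := by
    intro i
    induction i with
    | zero => exact fun _ => (extDist_of_isZero 𝕜 t M S.isZero_zero).le.trans zero_le
    | succ i ih =>
      intro hi
      obtain ⟨g, h, hS⟩ := S.dist ⟨i, hi⟩
      refine (extDist_obj₂_le 𝕜 hfin t M hS).trans ?_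
      rw [Triangle.mk_obj₃, extDist_shift, Fin.sum_univ_castSucc, add_mul]
      exact add_le_add (ih (by omega)) le_rfl
  calc extDist 𝕜 t M P ≤ extDist 𝕜 t M (P ⊞ S.N') :=
        extDist_le_of_retract 𝕜 hfin t M (BinaryBiproduct.bicone P S.N').retract_left
    _ = extDist 𝕜 t M (S.A (Fin.last S.m)) := extDist_congr 𝕜 t M S.lastIso.symm
    _ ≤ S.value t * extDist 𝕜 t M N := by
        have := key S.m le_rfl
        simp only [Fin.castLE_rfl, id] at this
        exact this

lemma value_ne_top {M N : D} (S : Tower M N) (t : ℝ) : S.value t ≠ ⊤ :=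
  ENNReal.sum_ne_top.2 fun _ _ => ENNReal.ofReal_ne_top

noncomputable def map {M N : D} (S : Tower M N) (F : D ⥤ D) [F.CommShift ℤ]
    [F.IsTriangulated] : Tower (F.obj M) (F.obj N) where
  m := S.m
  A i := F.obj (S.A i)
  f i := F.map (S.f i)
  shifts := S.shifts
  N' := F.obj S.N'
  isZero_zero := F.map_isZero S.isZero_zero
  lastIso :=
    have := preservesBinaryBiproduct_of_preservesBinaryProduct (X := N) (Y := S.N') F
    F.mapIso S.lastIso ≪≫ F.mapBiprod N S.N'
  dist i := by
    obtain ⟨g, h, hS⟩ := S.dist i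
    refine ⟨F.map g ≫ (F.commShiftIso (S.shifts i)).hom.app M,
      (F.commShiftIso (S.shifts i)).inv.app M ≫ F.map h ≫
        (F.commShiftIso (1 : ℤ)).hom.app (S.A i.castSucc), ?_⟩
    refine isomorphic_distinguished _ (F.map_distinguished _ hS) _ ?_
    exact Triangle.isoMk _ _ (Iso.refl _) (Iso.refl _)
      ((F.commShiftIso (S.shifts i)).symm.app M) ((comp_id _).trans (id_comp _).symm)
      (by erw [Category.assoc, Iso.hom_inv_id_app, comp_id, id_comp]; rfl)
      ((congrArg _ ((shiftFunctor D 1).map_id _)).trans (comp_id _))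

noncomputable def mapFpow {M N : D} (S : Tower M N) (F : D ⥤ D) [F.CommShift ℤ]
    [F.IsTriangulated] : ∀ n : ℕ, Tower ((fpow F n).obj M) ((fpow F n).obj N)
  | 0 => S
  | n + 1 => (S.mapFpow F n).map F

lemma value_mapFpow {M N : D} (S : Tower M N) (F : D ⥤ D) [F.CommShift ℤ]
    [F.IsTriangulated] (n : ℕ) (t : ℝ) : (S.mapFpow F n).value t = S.value t := by
  induction n with
  | zero => rfl
  | succ n ih => exact ih

end Tower

lemma polyEntropy_eq_zero_of_bounds {t h c₁ c₂ : ℝ} {F : D ⥤ D} {G : D}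
    (hent : entropy t F G = h) (hc₁ : 0 < c₁)
    (hlow : ∀ n : ℕ, ENNReal.ofReal (c₁ * exp (n * h)) ≤ complexity t G ((fpow F n).obj G))
    (hup : ∀ n : ℕ, complexity t G ((fpow F n).obj G) ≤ ENNReal.ofReal (c₂ * exp (n * h))) :
    polyEntropy t F G = 0 := by
  have hpos (n : ℕ) : 0 < c₁ * exp (n * h) := mul_pos hc₁ (exp_pos _)
  have hne_top (n : ℕ) : complexity t G ((fpow F n).obj G) ≠ ⊤ :=
    ne_top_of_le_ne_top ENNReal.ofReal_ne_top (hup n)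
  set g : ℕ → ℝ := fun n => (complexity t G ((fpow F n).obj G)).toReal
  have hg_low (n : ℕ) : c₁ * exp (n * h) ≤ g n :=
    (ENNReal.ofReal_le_iff_le_toReal (hne_top n)).1 (hlow n)
  have hg_up (n : ℕ) : g n ≤ c₂ * exp (n * h) :=
    ENNReal.toReal_le_of_le_ofReal (ENNReal.ofReal_pos.1
      ((ENNReal.ofReal_pos.2 (hpos n)).trans_le ((hlow n).trans (hup n)))).le (hup n)
  have hlog (n : ℕ) : ENNReal.log (complexity t G ((fpow F n).obj G)) = Real.log (g n) := by
    rw [← ENNReal.log_ofReal_of_pos ((hpos n).trans_le (hg_low n)),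
      ENNReal.ofReal_toReal (hne_top n)]
  unfold polyEntropy
  simp_rw [hent, hlog, ← EReal.coe_mul, ← EReal.coe_sub, ← EReal.coe_mul]
  exact ((EReal.tendsto_coe.2 (tendsto_log_sub_mul_inv_log hc₁ hg_low hg_up)).limsup_eq).trans
    EReal.coe_zero

lemma exists_le_extDist_fpow (hfin : HomFinite D 𝕜) (hbdd : ExtBounded D) (t : ℝ) {G : D}
    (hG : IsSplitGenerator G) (T : D ⥤ D) [T.CommShift ℤ] [T.IsTriangulated] {E : D}
    (hE : ¬IsZero E) {s : ℤ} (e : T.obj E ≅ E⟦s⟧) :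
    ∃ c : ℝ, 0 < c ∧
      ∀ n : ℕ, ENNReal.ofReal (c * exp (n * (s * t))) ≤ extDist 𝕜 t G ((fpow T n).obj G) := by
  obtain ⟨S⟩ := hG E
  have hε_pos := Tower.extDist_pos 𝕜 hfin t S hE
  have hε_top := (extDist_lt_top 𝕜 hbdd t G E).ne
  have key (n : ℕ) : ENNReal.ofReal (exp (n * (s * t))) * extDist 𝕜 t G E ≤
      S.value t * extDist 𝕜 t G ((fpow T n).obj G) := by
    have hshift : ((s * n : ℤ) : ℝ) * t = n * (s * t) := by push_cast; ring
    calc ENNReal.ofReal (exp (n * (s * t))) * extDist 𝕜 t G E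
        = extDist 𝕜 t G ((fpow T n).obj E) := by
          rw [extDist_congr 𝕜 t G (fpowObjIsoShift T e n), extDist_shift, hshift]
      _ ≤ S.value t * extDist 𝕜 t G ((fpow T n).obj G) := by
          simpa only [Tower.value_mapFpow] using
            Tower.extDist_le_value_mul 𝕜 hfin t G (S.mapFpow T n)
  have hv_ne_zero : S.value t ≠ 0 := by
    intro hv
    simpa [hv, hε_pos.ne'] using key 0
  refine ⟨(extDist 𝕜 t G E / S.value t).toReal,
    ENNReal.toReal_pos (ENNReal.div_pos hε_pos.ne' (S.value_ne_top t)).ne'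
      (ENNReal.div_ne_top hε_top hv_ne_zero), fun n => ?_⟩
  rw [ENNReal.ofReal_mul ENNReal.toReal_nonneg, ENNReal.ofReal_toReal
    (ENNReal.div_ne_top hε_top hv_ne_zero), ← ENNReal.mul_div_right_comm,
    mul_comm (extDist 𝕜 t G E)]
  exact ENNReal.div_le_of_le_mul' (key n)

lemma polyEntropy_eq_zero_of_iso_shift (hfin : HomFinite D 𝕜) (hbdd : ExtBounded D)
    (hcomp : Comparability D 𝕜) {t h : ℝ} {G : D} (hG : IsSplitGenerator G) (T : D ⥤ D)
    [T.CommShift ℤ] [T.IsTriangulated] (A : D) {s : ℤ}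
    (htri : ∀ n : ℕ, ∃ (f : A⟦s * n⟧ ⟶ (fpow T n).obj G)
      (g : (fpow T n).obj G ⟶ (fpow T (n + 1)).obj G)
      (h : (fpow T (n + 1)).obj G ⟶ (A⟦s * n⟧)⟦(1 : ℤ)⟧), Triangle.mk f g h ∈ distTriang D)
    (hst : s * t ≠ 0) {E : D} (hE : ¬IsZero E) {r : ℤ} (e : T.obj E ≅ E⟦r⟧) (hr : r * t = h)
    (hmax : max (s * t) 0 = h) (hent : entropy t T G = h) :
    polyEntropy t T G = 0 := by
  obtain ⟨C₁, C₂, hC, hcomp⟩ := hcomp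
  obtain ⟨c₁, hc₁, hlow⟩ := exists_le_extDist_fpow 𝕜 hfin hbdd t hG T hE e
  obtain ⟨c₂, hup⟩ := exists_extDist_le_of_distTriang_succ 𝕜 hfin hbdd G A hst
    (fun n => (fpow T n).obj G) htri
  refine polyEntropy_eq_zero_of_bounds hent (mul_pos (hC t).1 hc₁) (c₂ := C₂ t * c₂)
    (fun n => ?_) (fun n => ?_)
  · calc ENNReal.ofReal (C₁ t * c₁ * exp (n * h))
        = ENNReal.ofReal (C₁ t) * ENNReal.ofReal (c₁ * exp (n * (r * t))) := by
          rw [hr, mul_assoc, ENNReal.ofReal_mul (hC t).1.le]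
      _ ≤ ENNReal.ofReal (C₁ t) * extDist 𝕜 t G ((fpow T n).obj G) := by gcongr; exact hlow n
      _ ≤ complexity t G ((fpow T n).obj G) := (hcomp t G _).1
  · calc complexity t G ((fpow T n).obj G)
        ≤ ENNReal.ofReal (C₂ t) * extDist 𝕜 t G ((fpow T n).obj G) := (hcomp t G _).2
      _ ≤ ENNReal.ofReal (C₂ t) * ENNReal.ofReal (c₂ * exp (n * max (s * t) 0)) := by
          gcongr; exact hup n
      _ = ENNReal.ofReal (C₂ t * c₂ * exp (n * h)) := by
          rw [hmax, mul_assoc, ENNReal.ofReal_mul (hC t).2.le]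

end Complexity

/-- For `d ≥ 2` and (an abstraction of) the spherical twist `T` along a
`d`-spherical object:
(iii) if `t < 0`, `h_t(T) = (1-d)t`, and there is a nonzero `E` with `T(E) ≅ E[1-d]`,
then `h^pol_t(T) = 0`;
(iv) if `t > 0`, `h_t(T) = 0`, and there is a nonzero `E'` with `T(E') ≅ E'`,
then `h^pol_t(T) = 0`. -/
theorem statement_13 {D : Type u} [Category.{v} D] [HasZeroObject D] [Preadditive D]
    [HasShift D ℤ] [∀ n : ℤ, (CategoryTheory.shiftFunctor D n).Additive] [Pretriangulated D]
    [HasBinaryBiproducts D] (𝕜 : Type*) [Field 𝕜] [Linear 𝕜 D]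
    (hfin : HomFinite D 𝕜) (hbdd : ExtBounded D) (hcomp : Comparability D 𝕜)
    (d : ℕ) (hd : 2 ≤ d) (T : D ⥤ D) [T.CommShift ℤ] [T.IsTriangulated]
    (hT : NotVirtuallyZero T)
    (G : D) (hG : IsSplitGenerator G) (A : D)
    (htri : ∀ n : ℕ, ∃ (f : (A⟦(1 - (d : ℤ)) * n⟧) ⟶ (fpow T n).obj G)
      (g : (fpow T n).obj G ⟶ (fpow T (n + 1)).obj G)
      (h : (fpow T (n + 1)).obj G ⟶ (A⟦(1 - (d : ℤ)) * n⟧)⟦(1 : ℤ)⟧),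
      Triangle.mk f g h ∈ distTriang D) :
    (∀ t : ℝ, t < 0 → entropy t T G = (((1 - (d : ℝ)) * t : ℝ) : EReal) →
      (∃ E : D, ¬ IsZero E ∧ Nonempty (T.obj E ≅ E⟦(1 - (d : ℤ))⟧)) →
      polyEntropy t T G = 0) ∧
    (∀ t : ℝ, 0 < t → entropy t T G = 0 →
      (∃ E' : D, ¬ IsZero E' ∧ Nonempty (T.obj E' ≅ E')) →
      polyEntropy t T G = 0) := by
  have hd' : (1 : ℝ) < d := by exact_mod_cast hd
  have hcast : ((1 - (d : ℤ) : ℤ) : ℝ) = 1 - d := by push_cast; ring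
  refine ⟨fun t ht hent ⟨E, hE, ⟨e⟩⟩ => ?_, fun t ht hent ⟨E, hE, ⟨e⟩⟩ => ?_⟩
  · have hpos : 0 < (1 - (d : ℝ)) * t := mul_pos_of_neg_of_neg (by linarith) ht
    exact polyEntropy_eq_zero_of_iso_shift 𝕜 hfin hbdd hcomp hG T A htri
      (by rw [hcast]; exact hpos.ne') hE e (by rw [hcast])
      (by rw [hcast]; exact max_eq_left hpos.le) hent
  · have hneg : (1 - (d : ℝ)) * t < 0 := mul_neg_of_neg_of_pos (by linarith) ht
    exact polyEntropy_eq_zero_of_iso_shift 𝕜 hfin hbdd hcomp hG T A htri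
      (by rw [hcast]; exact hneg.ne) hE (e ≪≫ (shiftFunctorZero D ℤ).symm.app E) (by simp)
      (by rw [hcast]; exact max_eq_right hneg.le) (hent.trans EReal.coe_zero.symm)

end CatDyn
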